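/- Let T be a tree with nonsingular s×s matrix edge weights, L its Laplacian, and L_v the principal submatrix obtained by deleting the row and column blocks of a vertex v. Then L_v is invertible and for vertices u, w ≠ v, the (u,w) block of L_v⁻¹ equals the sum of W(e)⁻¹ over all edges e lying on both the path from u to v and the path from w to v. -/

import Mathlib

open scoped Classical
open Matrix

/-- The block Laplacian matrix of a graph whose edges carry `d × d` real matrix weights. -/
noncomputable def lap {V : Type*} [Fintype V] (G : SimpleGraph V) (d : ℕ)
    (W : Sym2 V → Matrix (Fin d) (Fin d) ℝ) :
    Matrix (V × Fin d) (V × Fin d) ℝ :=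
  Matrix.of fun p q =>
    if p.1 = q.1 then (∑ x ∈ G.neighborFinset p.1, W s(p.1, x)) p.2 q.2
    else if G.Adj p.1 q.1 then -(W s(p.1, q.1)) p.2 q.2 else 0

/-- The unique path in a tree between two vertices. -/
noncomputable def pathWalk {V : Type*} {G : SimpleGraph V} (hT : G.IsTree) (u v : V) :
    G.Walk u v := (hT.existsUnique_path u v).choose

/-- The list of edges of the unique path between two vertices of a tree. -/
noncomputable def pathEdges {V : Type*} {G : SimpleGraph V} (hT : G.IsTree) (u v : V) :
    List (Sym2 V) := (pathWalk hT u v).edges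

/-!
Write `N(a, b)` for the sum of `W(e)⁻¹` over the edges common to the paths from `a` and from `b`
to `v`; then `L_v N = 1`, checked block by block. Row `u` of the block Laplacian sends a block
column `M` to `∑_{x ~ u} W(ux) (M u - M x)`. For an edge `ux`, the path from one of `u`, `x` to
`v` is the path from the other preceded by `ux`, so `W(ux) (N(u, z) - N(x, z))` is `±1` when `ux`
lies on the path from `z` to `v` (`+` when `ux` is the first edge of the path from `u`) and `0`
otherwise. A path from `z` to `v` passing through `u ≠ z` enters `u` by an edge of sign `-` and
leaves it by one of sign `+`, while at `u = z` only the leaving edge counts: the row sums are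
`δ_{uz}`.
-/

open SimpleGraph

section BlockLaplacian

variable {V R : Type*} [Fintype V] [Ring R]

noncomputable def lapBlocks (G : SimpleGraph V) (W : Sym2 V → R) : Matrix V V R :=
  Matrix.of fun u w =>
    if u = w then ∑ x ∈ G.neighborFinset u, W s(u, x) else if G.Adj u w then -W s(u, w) else 0

theorem comp_lapBlocks (G : SimpleGraph V) (d : ℕ) (W : Sym2 V → Matrix (Fin d) (Fin d) ℝ) :
    comp V V (Fin d) (Fin d) ℝ (lapBlocks G W) = lap G d W := by
  ext p q
  simp only [comp_apply, lapBlocks, lap, of_apply]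
  split_ifs <;> rfl

theorem lapBlocks_mulVec_apply (G : SimpleGraph V) (W : Sym2 V → R) (M : V → R) (u : V) :
    (lapBlocks G W *ᵥ M) u = ∑ x ∈ G.neighborFinset u, W s(u, x) * (M u - M x) := by
  have hsplit : ∀ w, lapBlocks G W u w =
      (if u = w then ∑ x ∈ G.neighborFinset u, W s(u, x) else 0) +
        if G.Adj u w then -W s(u, w) else 0 := fun w => by
    by_cases h : u = w
    · subst h
      simp [lapBlocks]
    · simp [lapBlocks, h]
  simp only [mulVec, dotProduct, hsplit, add_mul, Finset.sum_add_distrib, ite_mul, zero_mul,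
    Finset.sum_ite_eq, Finset.mem_univ, if_true, ← Finset.sum_filter,
    ← neighborFinset_eq_filter, Finset.sum_mul, neg_mul, Finset.sum_neg_distrib, mul_sub,
    Finset.sum_sub_distrib, ← sub_eq_add_neg]

end BlockLaplacian

theorem sum_neighborFinset_ite_eq_edge {V R : Type*} [Fintype V] [DecidableEq V]
    [AddCommMonoid R] {G : SimpleGraph V} {z b : V} (h : G.Adj z b) (u : V) (f : V → R) :
    ∑ x ∈ G.neighborFinset u, (if s(u, x) = s(z, b) then f x else 0) =
      if u = z then f b else if u = b then f z else 0 := by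
  by_cases huz : u = z
  · subst huz
    simp [h, h.ne]
  · by_cases hub : u = b
    · subst hub
      simp [huz, h.symm, Sym2.eq_swap (a := u)]
    · simp [huz, hub]

section TreePaths

variable {V : Type*} {G : SimpleGraph V} (hT : G.IsTree)

theorem pathWalk_isPath (u v : V) : (pathWalk hT u v).IsPath :=
  (hT.existsUnique_path u v).choose_spec.1

theorem eq_pathWalk {u v : V} {p : G.Walk u v} (hp : p.IsPath) : p = pathWalk hT u v :=
  (hT.existsUnique_path u v).choose_spec.2 p hp

theorem pathEdges_eq_of_isPath {u v : V} {p : G.Walk u v} (hp : p.IsPath) :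
    pathEdges hT u v = p.edges := by
  rw [pathEdges, ← eq_pathWalk hT hp]

theorem pathEdges_self (v : V) : pathEdges hT v v = [] :=
  pathEdges_eq_of_isPath hT Walk.IsPath.nil

theorem pathEdges_nodup (u v : V) : (pathEdges hT u v).Nodup :=
  (pathWalk_isPath hT u v).edges_nodup

variable [DecidableEq V]

theorem pathEdges_eq_cons_of_mem_support {x u v : V} (h : G.Adj x u)
    (hu : u ∈ (pathWalk hT x v).support) :
    pathEdges hT x v = s(x, u) :: pathEdges hT u v := by
  have hp := pathWalk_isPath hT x v
  have htake : (pathWalk hT x v).takeUntil u hu = (Path.singleton h : G.Walk x u) :=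
    (eq_pathWalk hT (hp.takeUntil hu)).trans (eq_pathWalk hT (Path.singleton h).2).symm
  rw [pathEdges, ← Walk.take_spec _ hu, Walk.edges_append, htake,
    pathEdges_eq_of_isPath hT (hp.dropUntil hu)]
  rfl

theorem pathEdges_eq_cons_or_eq_cons_of_adj {u x : V} (h : G.Adj u x) (v : V) :
    pathEdges hT u v = s(u, x) :: pathEdges hT x v ∨
      pathEdges hT x v = s(u, x) :: pathEdges hT u v := by
  by_cases hu : u ∈ (pathWalk hT x v).support
  · right
    rw [pathEdges_eq_cons_of_mem_support hT h.symm hu, Sym2.eq_swap]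
  · left
    rw [pathEdges_eq_of_isPath hT ((pathWalk_isPath hT x v).cons hu (h := h))]
    rfl

theorem sum_neighborFinset_ite_mem_edges_of_isPath [Fintype V] {R : Type*} [Ring R] {v z : V}
    {q : G.Walk z v} (hq : q.IsPath) {u : V} (hu : u ≠ v) :
    ∑ x ∈ G.neighborFinset u,
      (if s(u, x) ∈ q.edges then (if s(u, x) ∈ pathEdges hT u v then 1 else -1) else 0 : R) =
      if u = z then 1 else 0 := by
  induction q with
  | nil =>
    rw [if_neg hu]
    exact Finset.sum_eq_zero fun x _ => if_neg List.not_mem_nil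
  | @cons z b v h p ih =>
    have hzb : s(z, b) ∉ p.edges := (List.nodup_cons.1 hq.edges_nodup).1
    have hsplit : ∀ x, (if s(u, x) ∈ (Walk.cons h p).edges then
          (if s(u, x) ∈ pathEdges hT u v then 1 else -1) else 0 : R) =
        (if s(u, x) = s(z, b) then (if s(u, x) ∈ pathEdges hT u v then 1 else -1) else 0) +
          if s(u, x) ∈ p.edges then (if s(u, x) ∈ pathEdges hT u v then 1 else -1) else 0 := by
      intro x
      simp only [Walk.edges_cons, List.mem_cons]
      by_cases hx : s(u, x) = s(z, b)
      · simp [hx, hzb]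
      · simp [hx]
    rw [Finset.sum_congr rfl fun x _ => hsplit x, Finset.sum_add_distrib,
      sum_neighborFinset_ite_eq_edge h, ih hq.of_cons hu]
    have hzb_mem : s(z, b) ∈ pathEdges hT z v := by
      rw [pathEdges_eq_of_isPath hT hq]
      exact List.mem_cons_self
    have hbz : s(b, z) ∉ pathEdges hT b v := by
      rw [pathEdges_eq_of_isPath hT hq.of_cons, Sym2.eq_swap]
      exact hzb
    by_cases huz : u = z
    · subst huz
      simp [h.ne, hzb_mem]
    · by_cases hub : u = b
      · subst hub
        simp [huz, hbz]
      · simp [huz, hub]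

end TreePaths

section PathOverlap

variable {V : Type*} [DecidableEq V] {G : SimpleGraph V} (hT : G.IsTree)
  {n K : Type*} [Fintype n] [DecidableEq n] [CommRing K] (W : Sym2 V → Matrix n n K)

noncomputable def pathOverlapInv (v a b : V) : Matrix n n K :=
  ∑ e ∈ (pathEdges hT a v).toFinset ∩ (pathEdges hT b v).toFinset, (W e)⁻¹

theorem pathOverlapInv_self_left (v b : V) : pathOverlapInv hT W v v b = 0 := by
  simp [pathOverlapInv, pathEdges_self]

theorem pathOverlapInv_sub_of_pathEdges_eq_cons {v a b : V} {e : Sym2 V}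
    (h : pathEdges hT a v = e :: pathEdges hT b v) (z : V) :
    pathOverlapInv hT W v a z - pathOverlapInv hT W v b z =
      if e ∈ pathEdges hT z v then (W e)⁻¹ else 0 := by
  have he : e ∉ (pathEdges hT b v).toFinset := by
    have := pathEdges_nodup hT a v
    rw [h, List.nodup_cons] at this
    simpa using this.1
  rw [pathOverlapInv, pathOverlapInv, h, List.toFinset_cons]
  split_ifs with hez
  · rw [Finset.insert_inter_of_mem (List.mem_toFinset.2 hez),
      Finset.sum_insert (fun hmem => he (Finset.mem_of_mem_inter_left hmem)), add_sub_cancel_right]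
  · rw [Finset.insert_inter_of_notMem (mt List.mem_toFinset.1 hez), sub_self]

theorem mul_pathOverlapInv_sub_of_adj (hW : ∀ e ∈ G.edgeSet, IsUnit (W e)) {u x : V}
    (h : G.Adj u x) (v z : V) :
    W s(u, x) * (pathOverlapInv hT W v u z - pathOverlapInv hT W v x z) =
      if s(u, x) ∈ pathEdges hT z v then
        (if s(u, x) ∈ pathEdges hT u v then 1 else -1) else 0 := by
  have hWW : W s(u, x) * (W s(u, x))⁻¹ = 1 :=
    mul_nonsing_inv _ ((isUnit_iff_isUnit_det _).mp (hW _ h))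
  rcases pathEdges_eq_cons_or_eq_cons_of_adj hT h v with hcons | hcons
  · have hmem : s(u, x) ∈ pathEdges hT u v := by
      rw [hcons]
      exact List.mem_cons_self
    rw [pathOverlapInv_sub_of_pathEdges_eq_cons hT W hcons, if_pos hmem]
    split_ifs <;> simp [hWW]
  · have hnot : s(u, x) ∉ pathEdges hT u v :=
      (List.nodup_cons.1 (hcons ▸ pathEdges_nodup hT x v)).1
    rw [← neg_sub, pathOverlapInv_sub_of_pathEdges_eq_cons hT W hcons, if_neg hnot]
    split_ifs <;> simp [hWW]

theorem lapBlocks_submatrix_mul_pathOverlapInv [Fintype V]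
    (hW : ∀ e ∈ G.edgeSet, IsUnit (W e)) (v : V) :
    (lapBlocks G W).submatrix Subtype.val Subtype.val *
      Matrix.of (fun a b : {x // x ≠ v} => pathOverlapInv hT W v a b) = 1 := by
  ext1 u z
  have hsum_ne := Fintype.sum_eq_add_sum_subtype_ne
    (fun w => lapBlocks G W u w * pathOverlapInv hT W v w z) v
  rw [pathOverlapInv_self_left, mul_zero, zero_add] at hsum_ne
  calc _ = (lapBlocks G W *ᵥ fun w => pathOverlapInv hT W v w z) u := hsum_ne.symm
    _ = ∑ x ∈ G.neighborFinset u, if s(↑u, x) ∈ pathEdges hT z v then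
          (if s(↑u, x) ∈ pathEdges hT u v then 1 else -1) else 0 := by
      rw [lapBlocks_mulVec_apply]
      exact Finset.sum_congr rfl fun x hx =>
        mul_pathOverlapInv_sub_of_adj hT W hW ((G.mem_neighborFinset _ _).1 hx) v z
    _ = if (u : V) = z then 1 else 0 :=
      sum_neighborFinset_ite_mem_edges_of_isPath hT (pathWalk_isPath hT z v) u.2
    _ = (1 : Matrix {x // x ≠ v} {x // x ≠ v} (Matrix n n K)) u z := by
      simp [one_apply, Subtype.ext_iff]

end PathOverlap

/-- For a tree with nonsingular matrix edge weights, the principal submatrix `L_v` of the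
Laplacian is invertible, and the `(u,w)` block of `L_v⁻¹` is the sum of `W(e)⁻¹` over the
edges `e` lying on both the path from `u` to `v` and the path from `w` to `v`. -/
theorem inv_lap_principal_submatrix {V : Type*} [Fintype V] [DecidableEq V]
    (G : SimpleGraph V) (hT : G.IsTree) (d : ℕ)
    (W : Sym2 V → Matrix (Fin d) (Fin d) ℝ)
    (hW : ∀ e ∈ G.edgeSet, IsUnit (W e)) (v : V) :
    letI Lv : Matrix ({x : V // x ≠ v} × Fin d) ({x : V // x ≠ v} × Fin d) ℝ :=
      (lap G d W).submatrix
        (fun p : {x : V // x ≠ v} × Fin d => ((p.1 : V), p.2))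
        (fun p : {x : V // x ≠ v} × Fin d => ((p.1 : V), p.2))
    IsUnit Lv ∧
      ∀ (u w : {x : V // x ≠ v}) (i j : Fin d),
        Lv⁻¹ (u, i) (w, j) =
          (∑ e ∈ (pathEdges hT (u : V) v).toFinset ∩ (pathEdges hT (w : V) v).toFinset,
            (W e)⁻¹) i j := by
  set A := (lapBlocks G W).submatrix (Subtype.val : {x // x ≠ v} → V) Subtype.val
  set N : Matrix {x // x ≠ v} {x // x ≠ v} (Matrix (Fin d) (Fin d) ℝ) :=
    Matrix.of fun a b => pathOverlapInv hT W v a b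
  rw [← comp_lapBlocks]
  change IsUnit (comp _ _ _ _ _ A) ∧ ∀ u w i j, (comp _ _ _ _ _ A)⁻¹ (u, i) (w, j) = _
  have hinv : comp _ _ _ _ _ A * comp _ _ _ _ _ N = 1 := by
    rw [← compRingEquiv_apply, ← compRingEquiv_apply, ← map_mul,
      lapBlocks_submatrix_mul_pathOverlapInv hT W hW v, map_one]
  refine ⟨.of_mul_eq_one _ hinv, fun u w i j => ?_⟩
  rw [inv_eq_right_inv hinv]
  rfl
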